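/- Let k be a positive integer and let a, b, c, d ≥ 0 with prescribed gcd-conditions: values A_1,...,A_a with gcd(A_l,k)=1, values B_1,...,B_b with gcd(B_j,k)=N_j (N_j ∣ k given), values C_1,...,C_c with gcd(C_s,k) even, values D_1,...,D_r with gcd(D_r,k)=M_r (M_r ∣ k, M_r < k given), all in ℤ/kℤ, subject to A_1+...+D_d ≡ 0 mod k. Then the number of such tuples equals (1/k)·Σ_{δ∣k} c(k,1,δ)^a · Π_j c(k,N_j,δ) · γ(k,δ,c) · Π_r c(k,M_r,δ), where γ(k,δ,c) = φ(δ) if c=0; 0 if k odd and c>0; 0 if k even, c>0, δ>2; (k/2)^c if k even, c>0, δ∈{1,2}; and c(k,l,δ) = (φ(k/l)/φ(δ/gcd(δ,l)))·μ(δ/gcd(δ,l)). -/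

import Mathlib

/-!
Write the indicator of `∑ Aₗ + ∑ Bⱼ + ∑ Cₛ + ∑ D_r = 0` as `k⁻¹ ∑ₘ e(m · (∑ Aₗ + ⋯ + ∑ D_r) / k)`.
For each `m` the count then factors into restricted exponential sums `∑_{gcd(x,k) = l} e(mx/k)`
and `∑_{2 ∣ gcd(x,k)} e(mx/k)`, and both depend on `m` only through its additive order
`δ = k / gcd(m,k)`. The first is the Ramanujan sum `c_{k/l}(m)` over the units of `ℤ/(k/l)`;
pushing it forward along the surjection onto the units of `ℤ/δ'`, where `δ' = δ / gcd(δ,l)` is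
the order of `l • m`, leaves `φ(k/l)/φ(δ')` times the sum of the primitive `δ'`-th roots of unity,
which is `μ(δ')` by Möbius inversion. The second is `k/2` if `k` is even and `δ ∣ 2`, and `0`
otherwise. Since `ℤ/k` has `φ(δ)` elements of order `δ`, the sum over `m` becomes the sum over
`δ ∣ k`, and `φ(δ)` combines with the `c`-th power of the second sum into `γ(k,δ,c)`.
-/

/-- `c(k,l,δ) = (φ(k/l)/φ(δ/gcd(δ,l))) · μ(δ/gcd(δ,l))`. -/
noncomputable def cCoeff (k l δ : ℕ) : ℚ :=
  ((Nat.totient (k / l) : ℚ) / (Nat.totient (δ / Nat.gcd δ l) : ℚ)) *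
    (ArithmeticFunction.moebius (δ / Nat.gcd δ l) : ℤ)

/-- `γ(k,δ,c)`: `φ(δ)` if `c = 0`; `0` if `k` odd and `c > 0`; `(k/2)^c` if `k` even,
`c > 0`, `δ ∈ {1,2}`; `0` if `k` even, `c > 0`, `δ > 2`. -/
noncomputable def gammaCoeff (k δ c : ℕ) : ℚ :=
  if c = 0 then (Nat.totient δ : ℚ)
  else if ¬ Even k then 0
  else if δ = 1 ∨ δ = 2 then ((k : ℚ) / 2) ^ c
  else 0

open Finset ArithmeticFunction
open scoped ArithmeticFunction.Moebius

lemma AddChar.map_sum_eq_prod {A M ι : Type*} [AddCommMonoid A] [CommMonoid M] (ψ : AddChar A M)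
    (s : Finset ι) (f : ι → A) : ψ (∑ i ∈ s, f i) = ∏ i ∈ s, ψ (f i) := by
  classical
  induction s using Finset.induction_on with
  | empty => simp
  | insert i s hi ih => rw [sum_insert hi, prod_insert hi, map_add_eq_mul, ih]

lemma AddChar.sum_piFinset_map_sum {A R ι : Type*} [AddCommMonoid A] [CommSemiring R] [Fintype ι]
    [DecidableEq ι] (ψ : AddChar A R) (S : ι → Finset A) :
    ∑ x ∈ Fintype.piFinset S, ψ (∑ i, x i) = ∏ i, ∑ y ∈ S i, ψ y := by
  rw [prod_univ_sum]
  exact sum_congr rfl fun x _ => ψ.map_sum_eq_prod _ _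

lemma MonoidHom.sum_comp_of_surjective {G H M : Type*} [Group G] [Group H] [Fintype G] [Fintype H]
    [DecidableEq H] [AddCommMonoid M] (f : G →* H) (hf : Function.Surjective f) (h : H → M) :
    ∑ g, h (f g) = #{g | f g = 1} • ∑ y, h y := by
  rw [sum_comp, image_univ_of_surjective hf, smul_sum]
  exact sum_congr rfl fun y _ => by rw [card_fiber_eq_of_mem_range f (hf y) (hf 1)]

lemma MonoidHom.card_smul_sum_comp_of_surjective {G H M : Type*} [Group G] [Group H] [Fintype G]
    [Fintype H] [AddCommMonoid M] (f : G →* H) (hf : Function.Surjective f) (h : H → M) :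
    Fintype.card H • ∑ g, h (f g) = Fintype.card G • ∑ y, h y := by
  classical
  have hG : Fintype.card G = #{g | f g = 1} * Fintype.card H := by
    simpa using f.sum_comp_of_surjective hf fun _ => (1 : ℕ)
  rw [f.sum_comp_of_surjective hf, smul_smul, hG, mul_comm]

lemma sum_addOrderOf_eq_sum_divisors {G M : Type*} [AddGroup G] [Fintype G] [IsAddCyclic G]
    [AddCommMonoid M] (F : ℕ → M) :
    ∑ g : G, F (addOrderOf g) = ∑ δ ∈ (Fintype.card G).divisors, Nat.totient δ • F δ := by
  classical
  rw [← sum_fiberwise_of_maps_to (g := addOrderOf) (t := (Fintype.card G).divisors)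
    fun g _ => Nat.mem_divisors.2 ⟨addOrderOf_dvd_card, Fintype.card_ne_zero⟩]
  refine sum_congr rfl fun δ hδ => ?_
  rw [sum_congr rfl fun g hg => by rw [(mem_filter.1 hg).2], sum_const,
    IsAddCyclic.card_addOrderOf_eq_totient (Nat.dvd_of_mem_divisors hδ)]

lemma sum_moebius_divisors_filter_dvd {n : ℕ} (hn : n ≠ 0) (t : ℕ) :
    ∑ d ∈ n.divisors with d ∣ t, μ d = if t.gcd n = 1 then 1 else 0 := by
  have hdiv : {d ∈ n.divisors | d ∣ t} = (t.gcd n).divisors := by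
    rw [← Nat.divisors_filter_dvd_of_dvd hn (Nat.gcd_dvd_right t n)]
    exact filter_congr fun d hd => by
      rw [Nat.dvd_gcd_iff, and_iff_left (Nat.dvd_of_mem_divisors hd)]
  rw [hdiv, ← coe_mul_zeta_apply, moebius_mul_coe_zeta, one_apply]

namespace ZMod
variable {k : ℕ} [NeZero k]

lemma stdAddChar_natCast_mul {l q : ℕ} [NeZero q] (h : l * q = k) (x : ZMod k) :
    stdAddChar ((l : ZMod k) * x) = stdAddChar (x.cast : ZMod q) := by
  have hx : (l : ZMod k) * x = ((l * x.val : ℤ) : ZMod k) := by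
    rw [Int.cast_mul, Int.cast_natCast, Int.cast_natCast, natCast_zmod_val]
  have hx' : (x.cast : ZMod q) = ((x.val : ℤ) : ZMod q) := by
    rw [cast_eq_val, Int.cast_natCast]
  rw [hx, hx', stdAddChar_coe, stdAddChar_coe]
  have hq : (q : ℂ) ≠ 0 := Nat.cast_ne_zero.2 (NeZero.ne q)
  have hl : (l : ℂ) ≠ 0 := by
    rintro hl0
    exact NeZero.ne k (by rw [← h, Nat.cast_eq_zero.1 hl0, zero_mul])
  have hk : (k : ℂ) = l * q := by rw [← h]; push_cast; rfl
  rw [hk]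
  congr 1
  push_cast
  field_simp

lemma val_natCast_mul_of_lt {l q t : ℕ} (h : l * q = k) (ht : t < q) :
    ((l * t : ℕ) : ZMod k).val = l * t := by
  apply val_cast_of_lt
  rw [← h]
  exact Nat.mul_lt_mul_of_pos_left ht
    (Nat.pos_of_ne_zero (left_ne_zero_of_mul (h.symm ▸ NeZero.ne k)))

lemma sum_dvd_val_eq {M : Type*} [AddCommMonoid M] {l q : ℕ} [NeZero q] (h : l * q = k)
    (f : ZMod k → M) :
    ∑ x with l ∣ x.val, f x = ∑ t : ZMod q, f ((l * t.val : ℕ) : ZMod k) := by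
  have hl : 0 < l := Nat.pos_of_ne_zero (left_ne_zero_of_mul (h.symm ▸ NeZero.ne k))
  symm
  refine sum_nbij' (fun t => ((l * t.val : ℕ) : ZMod k)) (fun x => ((x.val / l : ℕ) : ZMod q))
    ?_ (fun _ _ => mem_univ _) ?_ ?_ (fun _ _ => rfl)
  · intro t _
    rw [mem_filter, val_natCast_mul_of_lt h t.val_lt]
    exact ⟨mem_univ _, dvd_mul_right l _⟩
  · intro t _
    rw [val_natCast_mul_of_lt h t.val_lt, Nat.mul_div_cancel_left _ hl, natCast_zmod_val]
  · intro x hx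
    have hlx : l ∣ x.val := (mem_filter.1 hx).2
    have hlt : x.val / l < q := by
      rw [Nat.div_lt_iff_lt_mul hl, mul_comm, h]; exact x.val_lt
    rw [val_cast_of_lt hlt, Nat.mul_div_cancel' hlx, natCast_zmod_val]

lemma sum_gcd_val_eq_sum_units {M : Type*} [AddCommMonoid M] {l q : ℕ} [NeZero q] (h : l * q = k)
    (f : ZMod k → M) :
    ∑ x with x.val.gcd k = l, f x = ∑ u : (ZMod q)ˣ, f ((l * (u : ZMod q).val : ℕ) : ZMod k) := by
  have hl : 0 < l := Nat.pos_of_ne_zero (left_ne_zero_of_mul (h.symm ▸ NeZero.ne k))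
  have hgcd (t : ℕ) : (l * t).gcd k = l * t.gcd q := by rw [← h, Nat.gcd_mul_left]
  symm
  refine sum_bij (fun u _ => ((l * (u : ZMod q).val : ℕ) : ZMod k)) ?_ ?_ ?_ (fun _ _ => rfl)
  · intro u _
    rw [mem_filter, val_natCast_mul_of_lt h (val_lt _), hgcd, val_coe_unit_coprime, mul_one]
    exact ⟨mem_univ _, rfl⟩
  · intro u _ v _ huv
    have := congrArg val huv
    rw [val_natCast_mul_of_lt h (val_lt _), val_natCast_mul_of_lt h (val_lt _)] at this
    exact Units.ext (val_injective _ (Nat.eq_of_mul_eq_mul_left hl this))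
  · intro x hx
    have hxl : x.val.gcd k = l := (mem_filter.1 hx).2
    obtain ⟨t, ht⟩ : l ∣ x.val := hxl ▸ Nat.gcd_dvd_left _ _
    have hcop : t.Coprime q := by
      rw [ht, hgcd] at hxl
      exact Nat.eq_of_mul_eq_mul_left hl (hxl.trans (mul_one l).symm)
    have htq : t < q := by
      refine lt_of_mul_lt_mul_left ?_ hl.le
      rw [← ht, h]; exact val_lt x
    refine ⟨unitOfCoprime t hcop, mem_univ _, ?_⟩
    rw [coe_unitOfCoprime, val_cast_of_lt htq, ← ht, natCast_zmod_val]

lemma sum_dvd_val_stdAddChar_mul {l q : ℕ} (h : l * q = k) (m : ZMod k) :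
    ∑ x with l ∣ x.val, stdAddChar (m * x) = if l • m = 0 then (q : ℂ) else 0 := by
  have hl : 0 < l := Nat.pos_of_ne_zero (left_ne_zero_of_mul (h.symm ▸ NeZero.ne k))
  have : NeZero q := ⟨right_ne_zero_of_mul (h.symm ▸ NeZero.ne k)⟩
  have hqk : q ∣ k := Dvd.intro_left l h
  have hterm (t : ZMod q) :
      stdAddChar (m * ((l * t.val : ℕ) : ZMod k)) = stdAddChar (t * (m.cast : ZMod q)) := by
    rw [show m * ((l * t.val : ℕ) : ZMod k) = (l : ZMod k) * (m * (t.val : ZMod k)) by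
        push_cast; ring,
      stdAddChar_natCast_mul h, cast_mul hqk, cast_natCast hqk, natCast_zmod_val, mul_comm]
  have hzero : (m.cast : ZMod q) = 0 ↔ l • m = 0 := by
    rw [cast_eq_val, natCast_eq_zero_iff, ← Nat.mul_dvd_mul_iff_left hl, h, ← natCast_eq_zero_iff,
      Nat.cast_mul, natCast_zmod_val, nsmul_eq_mul]
  rw [sum_dvd_val_eq h, sum_congr rfl fun t _ => hterm t,
    AddChar.sum_mulShift _ (isPrimitive_stdAddChar q), card, if_congr hzero rfl rfl,
    Nat.cast_ite, Nat.cast_zero]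

lemma sum_units_stdAddChar : ∑ u : (ZMod k)ˣ, stdAddChar (u : ZMod k) = μ k := by
  calc ∑ u : (ZMod k)ˣ, stdAddChar (u : ZMod k)
      = ∑ x with x.val.gcd k = 1, stdAddChar x := by
        rw [sum_gcd_val_eq_sum_units (one_mul k)]
        simp only [one_mul, natCast_zmod_val]
    _ = ∑ x, ∑ d ∈ k.divisors with d ∣ x.val, (μ d : ℂ) * stdAddChar x := by
        rw [sum_filter]
        refine sum_congr rfl fun x _ => ?_
        rw [← sum_mul, ← Int.cast_sum, sum_moebius_divisors_filter_dvd (NeZero.ne k)]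
        split_ifs <;> simp
    _ = ∑ d ∈ k.divisors, (μ d : ℂ) * ∑ x : ZMod k with d ∣ x.val, stdAddChar (1 * x) := by
        simp_rw [sum_filter, mul_sum, one_mul]
        rw [sum_comm]
        exact sum_congr rfl fun d _ => sum_congr rfl fun x _ => by split_ifs <;> simp
    _ = μ k := by
        have hk := Nat.mem_divisors_self k (NeZero.ne k)
        rw [sum_eq_single_of_mem k hk fun d hd hdk => ?_]
        · rw [sum_dvd_val_stdAddChar_mul (mul_one k), if_pos (by simp), Nat.cast_one, mul_one]
        · obtain ⟨hdk', -⟩ := Nat.mem_divisors.1 hd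
          rw [sum_dvd_val_stdAddChar_mul (Nat.mul_div_cancel' hdk'), if_neg, mul_zero]
          rw [nsmul_eq_mul, mul_one, natCast_eq_zero_iff]
          exact fun hkd => hdk (Nat.dvd_antisymm hdk' hkd)

lemma sum_units_stdAddChar_natCast_mul {w : ℕ} (hw : w.Coprime k) :
    ∑ v : (ZMod k)ˣ, stdAddChar ((w : ZMod k) * (v : ZMod k)) = μ k := by
  rw [← sum_units_stdAddChar]
  exact Fintype.sum_equiv (Equiv.mulLeft (unitOfCoprime w hw)) _ _ fun v => by
    rw [Equiv.coe_mulLeft, Units.val_mul, coe_unitOfCoprime]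

lemma sum_units_stdAddChar_mul_val {q : ℕ} [NeZero q] (m : ZMod k) (hm : addOrderOf m ∣ q) :
    ∑ u : (ZMod q)ˣ, stdAddChar (m * ((u : ZMod q).val : ZMod k))
      = (Nat.totient q : ℂ) / Nat.totient (addOrderOf m) * μ (addOrderOf m) := by
  set e := addOrderOf m
  have : NeZero e := ⟨fun he => NeZero.ne q (Nat.eq_zero_of_zero_dvd (he ▸ hm))⟩
  set g := k.gcd m.val
  have hge : g * e = k := by
    rw [show e = k / g by rw [← addOrderOf_coe _ (NeZero.ne k), natCast_zmod_val],
      Nat.mul_div_cancel' (Nat.gcd_dvd_left _ _)]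
  obtain ⟨w, hw⟩ : g ∣ m.val := Nat.gcd_dvd_right _ _
  have hcop : w.Coprime e := by
    have hg : g = g * e.gcd w := by rw [← Nat.gcd_mul_left, hge, ← hw]
    exact Nat.Coprime.symm (Nat.eq_of_mul_eq_mul_left (Nat.gcd_pos_of_pos_left _
      (Nat.pos_of_ne_zero (NeZero.ne k))) (hg.symm.trans (mul_one g).symm))
  have hek : e ∣ k := Dvd.intro_left g hge
  -- `m = g * w` with `w` a unit mod `e = k / g`, so `stdAddChar (m * ·)` factors through `ZMod e`
  have hterm (u : (ZMod q)ˣ) : stdAddChar (m * ((u : ZMod q).val : ZMod k))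
      = stdAddChar ((w : ZMod e) * (unitsMap hm u : ZMod e)) := by
    rw [show m = (g : ZMod k) * w by rw [← Nat.cast_mul, ← hw, natCast_zmod_val], mul_assoc,
      stdAddChar_natCast_mul hge, cast_mul hek, cast_natCast hek, cast_natCast hek, unitsMap_val,
      cast_eq_val]
  have hfib := (unitsMap hm).card_smul_sum_comp_of_surjective (unitsMap_surjective hm)
    fun v => stdAddChar ((w : ZMod e) * (v : ZMod e))
  rw [card_units_eq_totient, card_units_eq_totient, sum_units_stdAddChar_natCast_mul hcop,
    nsmul_eq_mul, nsmul_eq_mul] at hfib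
  have hφ : (Nat.totient e : ℂ) ≠ 0 := Nat.cast_ne_zero.2 (Nat.totient_pos.2 (NeZero.pos e)).ne'
  rw [sum_congr rfl fun u _ => hterm u, div_mul_eq_mul_div, eq_div_iff hφ, mul_comm, hfib]

lemma sum_gcd_val_stdAddChar_mul {l : ℕ} (hl : l ∣ k) (m : ZMod k) :
    ∑ x with x.val.gcd k = l, stdAddChar (m * x) = (cCoeff k l (addOrderOf m) : ℂ) := by
  obtain ⟨q, hq⟩ := hl
  have hl0 : l ≠ 0 := fun h => NeZero.ne k (by rw [hq, h, zero_mul])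
  have : NeZero q := ⟨fun h => NeZero.ne k (by rw [hq, h, mul_zero])⟩
  have hord : addOrderOf (l • m) ∣ q := addOrderOf_dvd_of_nsmul_eq_zero <| by
    rw [smul_smul, mul_comm, ← hq, nsmul_eq_mul, natCast_self, zero_mul]
  rw [sum_gcd_val_eq_sum_units hq.symm]
  simp_rw [show ∀ t : ℕ, m * ((l * t : ℕ) : ZMod k) = (l • m) * (t : ZMod k) by
    intro t; rw [nsmul_eq_mul]; push_cast; ring]
  have hkl : k / l = q := by rw [hq, Nat.mul_div_cancel_left _ (Nat.pos_of_ne_zero hl0)]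
  rw [sum_units_stdAddChar_mul_val _ hord, addOrderOf_nsmul' _ hl0, cCoeff, hkl]
  push_cast
  rfl

lemma sum_even_gcd_val_stdAddChar_mul (m : ZMod k) :
    ∑ x with Even (x.val.gcd k), stdAddChar (m * x)
      = if Even k ∧ addOrderOf m ∣ 2 then (k : ℂ) / 2 else 0 := by
  by_cases hk : Even k
  · have h2 : 2 ∣ k := even_iff_two_dvd.1 hk
    rw [filter_congr fun x _ => by rw [even_iff_two_dvd, Nat.dvd_gcd_iff, and_iff_left h2],
      sum_dvd_val_stdAddChar_mul (Nat.mul_div_cancel' h2), Nat.cast_div h2 two_ne_zero,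
      Nat.cast_ofNat]
    simp only [← addOrderOf_dvd_iff_nsmul_eq_zero, hk, true_and]
  · rw [if_neg (by tauto), sum_eq_zero]
    intro x hx
    exact absurd (even_iff_two_dvd.2 ((even_iff_two_dvd.1 (mem_filter.1 hx).2).trans
      (Nat.gcd_dvd_right _ _))) hk

lemma card_filter_eq_zero_eq_sum_stdAddChar {α : Type*} (s : Finset α) (σ : α → ZMod k) :
    (#{p ∈ s | σ p = 0} : ℂ) = 1 / k * ∑ m : ZMod k, ∑ p ∈ s, stdAddChar (m * σ p) := by
  have hk : (k : ℂ) ≠ 0 := Nat.cast_ne_zero.2 (NeZero.ne k)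
  rw [sum_comm, mul_sum, card_filter, Nat.cast_sum]
  refine sum_congr rfl fun p _ => ?_
  rw [AddChar.sum_mulShift _ (isPrimitive_stdAddChar k), card]
  split_ifs <;> field_simp <;> simp

lemma card_piFinset_sum_eq_zero {ι : Type*} [Fintype ι] [DecidableEq ι] (S : ι → Finset (ZMod k)) :
    (#{x ∈ Fintype.piFinset S | ∑ i, x i = 0} : ℂ)
      = 1 / k * ∑ m : ZMod k, ∏ i, ∑ y ∈ S i, stdAddChar (m * y) := by
  rw [card_filter_eq_zero_eq_sum_stdAddChar]
  congr 1
  refine sum_congr rfl fun m _ => ?_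
  simpa only [AddChar.mulShift_apply] using (stdAddChar.mulShift m).sum_piFinset_map_sum S

end ZMod

lemma totient_mul_pow_eq_gammaCoeff (k δ c : ℕ) :
    (Nat.totient δ : ℚ) * (if Even k ∧ δ ∣ 2 then (k : ℚ) / 2 else 0) ^ c = gammaCoeff k δ c := by
  rcases Nat.eq_zero_or_pos c with rfl | hc
  · simp [gammaCoeff]
  have hδ2 : δ ∣ 2 ↔ δ = 1 ∨ δ = 2 := Nat.dvd_prime Nat.prime_two
  by_cases hk : Even k
  · by_cases hδ : δ = 1 ∨ δ = 2
    · rcases hδ with rfl | rfl <;> simp [gammaCoeff, hk, hc.ne']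
    · simp [gammaCoeff, hk, hδ, hδ2, hc.ne']
  · simp [gammaCoeff, hk, hc.ne']

/-- Character-sum count: the number of tuples `(A, B, C, D)` in `(ℤ/kℤ)^{a+b+c+d}` with
`gcd(Aₗ,k)=1`, `gcd(Bⱼ,k)=Nⱼ`, `gcd(Cₛ,k)` even, `gcd(D_r,k)=M_r`, summing to `0 mod k`,
equals `(1/k) Σ_{δ∣k} c(k,1,δ)^a Π_j c(k,Nⱼ,δ) γ(k,δ,c) Π_r c(k,M_r,δ)`. -/
theorem card_restricted_tuples (k : ℕ) (hk : 0 < k) (a b c d : ℕ)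
    (N : Fin b → ℕ) (M : Fin d → ℕ)
    (hN : ∀ j, N j ∣ k) (hM : ∀ r, M r ∣ k ∧ M r < k) :
    (Nat.card {p : (Fin a → ZMod k) × (Fin b → ZMod k) × (Fin c → ZMod k) × (Fin d → ZMod k) //
        (∀ l, Nat.gcd ((p.1 l).val) k = 1) ∧
        (∀ j, Nat.gcd ((p.2.1 j).val) k = N j) ∧
        (∀ s, Even (Nat.gcd ((p.2.2.1 s).val) k)) ∧
        (∀ r, Nat.gcd ((p.2.2.2 r).val) k = M r) ∧
        ((∑ l, p.1 l) + (∑ j, p.2.1 j) + (∑ s, p.2.2.1 s) + (∑ r, p.2.2.2 r) = 0)} : ℚ)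
    = (1 / k) * ∑ δ ∈ Nat.divisors k,
        cCoeff k 1 δ ^ a * (∏ j, cCoeff k (N j) δ) * gammaCoeff k δ c *
          (∏ r, cCoeff k (M r) δ) := by
  have : NeZero k := ⟨hk.ne'⟩
  let S : Fin a ⊕ Fin b ⊕ Fin c ⊕ Fin d → Finset (ZMod k) :=
    Sum.elim (fun _ => univ.filter fun x => x.val.gcd k = 1) <|
      Sum.elim (fun j => univ.filter fun x => x.val.gcd k = N j) <|
      Sum.elim (fun _ => univ.filter fun x => Even (x.val.gcd k)) fun r =>
        univ.filter fun x => x.val.gcd k = M r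
  let e := ((Equiv.sumArrowEquivProdArrow (Fin a) _ _).trans <| (Equiv.refl _).prodCongr <|
    (Equiv.sumArrowEquivProdArrow (Fin b) _ _).trans <| (Equiv.refl _).prodCongr <|
      Equiv.sumArrowEquivProdArrow (Fin c) (Fin d) (ZMod k)).symm
  apply Rat.cast_injective (α := ℂ)
  push_cast
  rw [Nat.card_eq_fintype_card, Fintype.card_subtype,
    card_equiv e (t := {x ∈ Fintype.piFinset S | ∑ i, x i = 0}) fun ⟨A, B, C, D⟩ => by
      simp [e, S, Fintype.mem_piFinset, Sum.forall, Fintype.sum_sum_type, add_assoc, and_assoc],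
    ZMod.card_piFinset_sum_eq_zero S]
  simp only [S, Fintype.prod_sum_type, Sum.elim_inl, Sum.elim_inr, prod_const, card_univ,
    Fintype.card_fin, ZMod.sum_gcd_val_stdAddChar_mul, one_dvd, hN, fun r => (hM r).1,
    ZMod.sum_even_gcd_val_stdAddChar_mul]
  rw [sum_addOrderOf_eq_sum_divisors fun δ => (cCoeff k 1 δ : ℂ) ^ a *
    ((∏ j, (cCoeff k (N j) δ : ℂ)) *
      ((if Even k ∧ δ ∣ 2 then (k : ℂ) / 2 else 0) ^ c * ∏ r, (cCoeff k (M r) δ : ℂ))), ZMod.card]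
  congr 1
  refine sum_congr rfl fun δ _ => ?_
  rw [nsmul_eq_mul, ← totient_mul_pow_eq_gammaCoeff]
  push_cast [apply_ite]
  ring
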